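/- arXiv:0810.3431 — 3 statements merged into one kernel-verified Lean document; each statement's English description precedes it below -/
import Mathlib

section
/- Let p ≥ 1 and let D be the closed unit disc in ℂ, with the 2p boundary points z_k = exp(2πi k / (2p)) for k = 0, …, 2p−1. Suppose γ_1, …, γ_p : [0,1] → D are injective paths whose images are pairwise disjoint, each of which meets the boundary circle ∂D exactly at its two endpoints, such that every endpoint is one of the points z_k and each z_k is an endpoint of exactly one path. Then every path γ_m joins a point z_a to a point z_b where a and b have opposite parity (one even index and one odd index). -/
/-!
Each arc joins two of the points `z_k`, so the arcs pair up the indices into chords. Two arcs in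
the closed disc whose endpoints interleave on the circle must meet: for paths `f` and `g`, the
nonvanishing map `(s, t) ↦ f s - g t` on the square has a continuous logarithm `L`, and on each
side of the square it stays in an open half-plane, so the change of `im L` along that side is a
difference of principal arguments. These changes add up to `-2π` around the square instead of
`0`. Hence the chords do not cross, the open arc of indices strictly between the two ends of a
chord is a union of whole chords, and so it has an even number of points: the two ends have
opposite parity.
-/

open Complex Real

/-- The `2p` equally spaced boundary points `z_k = exp(2πik/(2p))` of the unit disc. -/
noncomputable def bdryPt (p : ℕ) (k : Fin (2 * p)) : ℂ :=
  Complex.exp (2 * Real.pi * Complex.I * k / (2 * p))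

open Set Function

theorem Finset.even_card_of_involution {α : Type*} {s : Finset α} (g : α → α)
    (hg_mem : ∀ a ∈ s, g a ∈ s) (hg_inv : ∀ a ∈ s, g (g a) = a)
    (hg_ne : ∀ a ∈ s, g a ≠ a) :
    Even s.card := by
  have h : ∑ _a ∈ s, (1 : ZMod 2) = 0 :=
    Finset.sum_involution (fun a _ => g a) (fun _ _ => rfl) (fun a ha _ => hg_ne a ha) hg_mem
      hg_inv
  rwa [Finset.sum_const, nsmul_one, ZMod.natCast_eq_zero_iff_even] at h

theorem Sum.swap_ne {α : Type*} (x : α ⊕ α) : x.swap ≠ x := by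
  cases x <;> simp

theorem odd_add_of_forall_not_interleaved {ι : Type*} {n : ℕ} (e : ι ⊕ ι ≃ Fin n)
    (h : ∀ x y, ¬(e x < e y ∧ e y < e x.swap ∧ e x.swap < e y.swap)) (x : ι ⊕ ι) :
    Odd ((e x : ℕ) + e x.swap) := by
  wlog hx : e x < e x.swap generalizing x
  · have hlt : e x.swap < e x := (not_lt.1 hx).lt_of_ne (e.injective.ne x.swap_ne)
    simpa [add_comm] using this x.swap (by simpa using hlt)
  have hmaps : ∀ y, e x < e y → e y < e x.swap → e x < e y.swap ∧ e y.swap < e x.swap := by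
    intro y hxy hyx
    have h₁ : ¬e y.swap < e x := fun hlt =>
      h y.swap x ⟨hlt, by simpa using hxy, by simpa using hyx⟩
    have h₂ : ¬e x.swap < e y.swap := fun hlt => h x y ⟨hxy, hyx, hlt⟩
    have h₃ : e y.swap ≠ e x := fun heq => by simp [← e.injective heq] at hyx
    have h₄ : e y.swap ≠ e x.swap := fun heq => by
      simp [Sum.swap_leftInverse.injective (e.injective heq)] at hxy
    exact ⟨(not_lt.1 h₁).lt_of_ne h₃.symm, (not_lt.1 h₂).lt_of_ne h₄⟩
  have heven : Even (Finset.Ioo (e x) (e x.swap)).card := by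
    refine Finset.even_card_of_involution (fun k => e (e.symm k).swap) ?_ ?_ ?_
    · intro k hk
      obtain ⟨y, rfl⟩ := e.surjective k
      simp only [Finset.mem_Ioo, Equiv.symm_apply_apply] at hk ⊢
      exact hmaps y hk.1 hk.2
    · intro k _
      simp
    · intro k _
      obtain ⟨y, rfl⟩ := e.surjective k
      simpa using y.swap_ne
  rw [Fin.card_Ioo] at heven
  obtain ⟨r, hr⟩ := heven
  exact ⟨r + e x, by omega⟩

instance : ContractibleSpace unitInterval :=
  (convex_Icc (0 : ℝ) 1).contractibleSpace (nonempty_Icc.2 zero_le_one)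

instance : LocallyPathConnectedSpace unitInterval :=
  (convex_Icc (0 : ℝ) 1).locallyPathConnectedSpace

theorem exists_continuous_exp_eq {A : Type*} [TopologicalSpace A] [SimplyConnectedSpace A]
    [LocallyPathConnectedSpace A] {F : A → ℂ} (hF : Continuous F) (hF0 : ∀ a, F a ≠ 0) :
    ∃ L : A → ℂ, Continuous L ∧ ∀ a, exp (L a) = F a := by
  obtain ⟨a₀⟩ := (inferInstance : Nonempty A)
  obtain ⟨L, -, hL⟩ := (isCoveringMapOn_exp.existsUnique_continuousMap_lifts ⟨F, hF⟩
    (exp_log (hF0 a₀)) hF0).exists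
  exact ⟨L, L.continuous, congrFun hL⟩

theorem im_sub_im_eq_arg_sub_arg {X : Type*} [TopologicalSpace X] [PreconnectedSpace X]
    {L : X → ℂ} (hL : Continuous L) {u : ℂ} (hu : ∀ x, exp (L x) / u ∈ slitPlane)
    (x y : X) :
    (L y).im - (L x).im = arg (exp (L y) / u) - arg (exp (L x) / u) := by
  have hu0 : u ≠ 0 := by
    rintro rfl
    simpa using hu x
  -- `L - log (exp L / u)` lifts the constant map `u` through `exp`, so it is constant.
  have hconst := isCoveringMap_exp.const_of_comp (g := fun x => L x - log (exp (L x) / u))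
    (hL.sub (continuous_iff_continuousAt.2 fun x =>
      ((hL.cexp.div_const u).continuousAt).clog (hu x)))
    (fun x x' => by simp [Complex.exp_sub, Complex.exp_log, hu0, Complex.exp_ne_zero]) x y
  simpa [← log_im, sub_eq_sub_iff_sub_eq_sub] using congrArg im hconst.symm

theorem sub_div_mem_slitPlane {z w : ℂ} (hz : ‖z‖ ≤ 1) (hw : ‖w‖ = 1) (hzw : z ≠ w) :
    (w - z) / w ∈ slitPlane := by
  have hw2 : normSq w = 1 := by rw [← Complex.sq_norm, hw, one_pow]
  have hz2 : normSq z ≤ 1 := by rw [← Complex.sq_norm]; nlinarith [norm_nonneg z]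
  have hd : 0 < normSq (w - z) := normSq_pos.2 (sub_ne_zero.2 hzw.symm)
  rw [mem_slitPlane_iff, div_re, hw2, div_one, div_one]
  left
  rw [normSq_apply] at hw2 hz2 hd
  simp only [sub_re, sub_im] at hd ⊢
  nlinarith

theorem arg_one_sub_exp_mul_I {θ : ℝ} (h₀ : 0 < θ) (h₁ : θ < 2 * π) :
    arg (1 - exp (θ * I)) = (θ - π) / 2 := by
  have hsin : 0 < 2 * Real.sin (θ / 2) := by
    have := Real.sin_pos_of_pos_of_lt_pi (x := θ / 2) (by linarith) (by linarith)
    linarith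
  have hfac : 1 - exp (θ * I) =
      ((2 * Real.sin (θ / 2) : ℝ) : ℂ) * exp (((θ - π) / 2 : ℝ) * I) := by
    set x : ℂ := (θ : ℂ) / 2
    have e1 : exp (θ * I) = exp (x * I) * exp (x * I) := by
      rw [← Complex.exp_add]; congr 1; ring
    have e2 : exp (-x * I) * exp (x * I) = 1 := by
      rw [← Complex.exp_add, neg_mul, neg_add_cancel, Complex.exp_zero]
    have e3 : ((θ - π) / 2 : ℝ) * I = x * I - π / 2 * I := by push_cast; ring
    rw [e3, Complex.exp_sub, exp_pi_div_two_mul_I, div_I]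
    push_cast
    rw [two_sin, e1]
    linear_combination (-1 : ℂ) * e2 + (exp (-x * I) - exp (x * I)) * exp (x * I) * I_sq
  rw [hfac, arg_real_mul _ hsin, arg_exp_mul_I, toIocMod_eq_self]
  constructor <;> linarith [Real.pi_pos]

theorem arg_exp_sub_exp_div_exp {α β : ℝ} (h₀ : α < β) (h₁ : β < α + 2 * π) :
    arg ((exp (α * I) - exp (β * I)) / exp (α * I)) = (β - α - π) / 2 := by
  have h : (exp (α * I) - exp (β * I)) / exp (α * I) = 1 - exp ((β - α : ℝ) * I) := by
    rw [sub_div, div_self (Complex.exp_ne_zero _), ← Complex.exp_sub]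
    push_cast; ring_nf
  rw [h, arg_one_sub_exp_mul_I] <;> linarith

theorem exp_ofReal_add_two_pi_mul_I (θ : ℝ) : exp ((θ + 2 * π : ℝ) * I) = exp (θ * I) := by
  push_cast
  rw [add_mul, Complex.exp_add, exp_two_pi_mul_I, mul_one]

theorem JoinedIn.inter_nonempty_of_interleaved {S T : Set ℂ}
    (hS : S ⊆ Metric.closedBall 0 1) (hT : T ⊆ Metric.closedBall 0 1)
    {a₁ b₁ a₂ b₂ : ℝ}
    (h₁ : a₁ < b₁) (h₂ : b₁ < a₂) (h₃ : a₂ < b₂) (h₄ : b₂ < a₁ + 2 * π)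
    (hjS : JoinedIn S (exp (a₁ * I)) (exp (a₂ * I)))
    (hjT : JoinedIn T (exp (b₁ * I)) (exp (b₂ * I))) : (S ∩ T).Nonempty := by
  by_contra hdisj
  set f := hjS.somePath
  set g := hjT.somePath
  have hfg s t : f s ≠ g t := fun h =>
    hdisj ⟨f s, hjS.somePath_mem s, h ▸ hjT.somePath_mem t⟩
  have hf s : ‖f s‖ ≤ 1 := mem_closedBall_zero_iff.1 (hS (hjS.somePath_mem s))
  have hg t : ‖g t‖ ≤ 1 := mem_closedBall_zero_iff.1 (hT (hjT.somePath_mem t))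
  obtain ⟨L, hL, hLF⟩ := exists_continuous_exp_eq (F := fun q : unitInterval × unitInterval =>
    f q.1 - g q.2) (by fun_prop) (fun q => sub_ne_zero.2 (hfg _ _))
  have hneg (z w : ℂ) : (z - w) / -w = (w - z) / w := by rw [div_neg, ← neg_div, neg_sub]
  have bottom := im_sub_im_eq_arg_sub_arg (L := fun s => L (s, 0)) (u := -g 0) (by fun_prop)
    (fun s => by simpa [hLF, hneg] using sub_div_mem_slitPlane (hf s) (by simp) (hfg s 0)) 0 1
  have top := im_sub_im_eq_arg_sub_arg (L := fun s => L (s, 1)) (u := -g 1) (by fun_prop)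
    (fun s => by simpa [hLF, hneg] using sub_div_mem_slitPlane (hf s) (by simp) (hfg s 1)) 0 1
  have left := im_sub_im_eq_arg_sub_arg (L := fun t => L (0, t)) (u := f 0) (by fun_prop)
    (fun t => by simpa [hLF] using sub_div_mem_slitPlane (hg t) (by simp) (hfg 0 t).symm) 0 1
  have right := im_sub_im_eq_arg_sub_arg (L := fun t => L (1, t)) (u := f 1) (by fun_prop)
    (fun t => by simpa [hLF] using sub_div_mem_slitPlane (hg t) (by simp) (hfg 1 t).symm) 0 1
  simp only [hLF, hneg, Path.source, Path.target] at bottom top left right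
  -- At some corners an angle is first moved up by `2π`, into the range where
  -- `arg_exp_sub_exp_div_exp` applies.
  rw [← exp_ofReal_add_two_pi_mul_I a₁,
    arg_exp_sub_exp_div_exp (α := b₁) (β := a₂) h₂ (by linarith),
    arg_exp_sub_exp_div_exp (α := b₁) (β := a₁ + 2 * π) (by linarith) (by linarith)]
    at bottom
  rw [← exp_ofReal_add_two_pi_mul_I a₁, ← exp_ofReal_add_two_pi_mul_I a₂,
    arg_exp_sub_exp_div_exp (α := b₂) (β := a₂ + 2 * π) (by linarith) (by linarith),
    arg_exp_sub_exp_div_exp (α := b₂) (β := a₁ + 2 * π) (by linarith) (by linarith)] at top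
  rw [arg_exp_sub_exp_div_exp (α := a₁) (β := b₂) (by linarith) (by linarith),
    arg_exp_sub_exp_div_exp (α := a₁) (β := b₁) h₁ (by linarith)] at left
  rw [← exp_ofReal_add_two_pi_mul_I b₁,
    arg_exp_sub_exp_div_exp (α := a₂) (β := b₂) h₃ (by linarith),
    arg_exp_sub_exp_div_exp (α := a₂) (β := b₁ + 2 * π) (by linarith) (by linarith)] at right
  linarith [Real.pi_pos]

noncomputable def bdryAngle (p : ℕ) (k : Fin (2 * p)) : ℝ :=
  π * k / p

theorem bdryPt_eq_exp (p : ℕ) (k : Fin (2 * p)) : bdryPt p k = exp (bdryAngle p k * I) := by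
  have hp : (p : ℂ) ≠ 0 := Nat.cast_ne_zero.2 (by have := k.pos; omega)
  rw [bdryPt, bdryAngle]
  push_cast
  field_simp

theorem strictMono_bdryAngle (p : ℕ) : StrictMono (bdryAngle p) := by
  intro j k hjk
  have hp : (0 : ℝ) < p := Nat.cast_pos.2 (by have := k.pos; omega)
  unfold bdryAngle
  gcongr
  exact_mod_cast hjk

theorem bdryAngle_mem_Ico (p : ℕ) (k : Fin (2 * p)) : bdryAngle p k ∈ Ico 0 (2 * π) := by
  have hp : (0 : ℝ) < p := Nat.cast_pos.2 (by have := k.pos; omega)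
  have hk : (k : ℝ) < 2 * p := by exact_mod_cast k.isLt
  refine ⟨by unfold bdryAngle; positivity, ?_⟩
  rw [bdryAngle, div_lt_iff₀ hp]
  nlinarith [Real.pi_pos]

theorem joinedIn_range {X : Type*} [TopologicalSpace X] {γ : unitInterval → X}
    (hγ : Continuous γ) : JoinedIn (range γ) (γ 0) (γ 1) :=
  ⟨⟨⟨γ, hγ⟩, rfl, rfl⟩, mem_range_self⟩

theorem not_interleaved_of_disjoint {ι : Type*} {p : ℕ} {γ : ι → unitInterval → ℂ}
    (hcont : ∀ m, Continuous (γ m)) (hmem : ∀ m t, γ m t ∈ Metric.closedBall (0 : ℂ) 1)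
    (hdisj : ∀ m n, m ≠ n → Disjoint (range (γ m)) (range (γ n)))
    {a b : ι → Fin (2 * p)} (ha : ∀ m, γ m 0 = bdryPt p (a m))
    (hb : ∀ m, γ m 1 = bdryPt p (b m)) (x y : ι ⊕ ι) :
    ¬(Sum.elim a b x < Sum.elim a b y ∧ Sum.elim a b y < Sum.elim a b x.swap ∧
      Sum.elim a b x.swap < Sum.elim a b y.swap) := by
  rintro ⟨h₁, h₂, h₃⟩
  have hjoin (w : ι ⊕ ι) : JoinedIn (range (γ (w.elim id id)))
      (exp (bdryAngle p (Sum.elim a b w) * I))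
      (exp (bdryAngle p (Sum.elim a b w.swap) * I)) := by
    rcases w with m | m <;>
      simp only [Sum.elim_inl, Sum.elim_inr, Sum.swap_inl, Sum.swap_inr, id, ← bdryPt_eq_exp,
        ← ha, ← hb]
    exacts [joinedIn_range (hcont m), (joinedIn_range (hcont m)).symm]
  have hne : x.elim id id ≠ y.elim id id := by
    rcases x with m | m <;> rcases y with n | n <;> rintro (rfl : m = n) <;> simp_all
  have hθ := strictMono_bdryAngle p
  obtain ⟨w, hwx, hwy⟩ := JoinedIn.inter_nonempty_of_interleaved
    (range_subset_iff.2 (hmem _)) (range_subset_iff.2 (hmem _)) (hθ h₁) (hθ h₂) (hθ h₃)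
    (by linarith [(bdryAngle_mem_Ico p (Sum.elim a b y.swap)).2,
      (bdryAngle_mem_Ico p (Sum.elim a b x)).1]) (hjoin x) (hjoin y)
  exact Set.disjoint_left.1 (hdisj _ _ hne) hwx hwy

theorem injective_sumElim_of_unique {ι κ X : Type*} {z : κ → X} {u v : ι → X}
    (huv : ∀ m, u m ≠ v m) {a b : ι → κ} (ha : ∀ m, u m = z (a m))
    (hb : ∀ m, v m = z (b m))
    (huniq : ∀ k m n, (z k = u m ∨ z k = v m) → (z k = u n ∨ z k = v n) → m = n) :
    Injective (Sum.elim a b) := by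
  rintro (m | m) (n | n) h <;> simp only [Sum.elim_inl, Sum.elim_inr, Sum.inl.injEq,
    Sum.inr.injEq, reduceCtorEq] at h ⊢
  · exact huniq (a m) m n (.inl (ha m).symm) (.inl (h ▸ ha n).symm)
  · obtain rfl := huniq (a m) m n (.inl (ha m).symm) (.inr (h ▸ hb n).symm)
    exact huv m ((ha m).trans (h ▸ (hb m).symm))
  · obtain rfl := huniq (b m) m n (.inr (hb m).symm) (.inl (h ▸ ha n).symm)
    exact huv m ((ha m).trans (h ▸ (hb m).symm))
  · exact huniq (b m) m n (.inr (hb m).symm) (.inr (h ▸ hb n).symm)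

theorem disc_arcs_join_opposite_parity_general (p : ℕ)
    (γ : Fin p → unitInterval → ℂ)
    (hcont : ∀ m, Continuous (γ m))
    (hinj : ∀ m, Function.Injective (γ m))
    (hmem : ∀ m t, γ m t ∈ Metric.closedBall (0 : ℂ) 1)
    (hdisj : ∀ m n, m ≠ n → Disjoint (Set.range (γ m)) (Set.range (γ n)))
    (hend0 : ∀ m, ∃ k : Fin (2 * p), γ m 0 = bdryPt p k)
    (hend1 : ∀ m, ∃ k : Fin (2 * p), γ m 1 = bdryPt p k)
    (huniq : ∀ k : Fin (2 * p), ∃! m : Fin p, bdryPt p k = γ m 0 ∨ bdryPt p k = γ m 1) :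
    ∀ m : Fin p, ∃ a b : Fin (2 * p), γ m 0 = bdryPt p a ∧ γ m 1 = bdryPt p b ∧
      ((Even (a : ℕ) ∧ Odd (b : ℕ)) ∨ (Odd (a : ℕ) ∧ Even (b : ℕ))) := by
  choose a ha using hend0
  choose b hb using hend1
  have hends : Bijective (Sum.elim a b) := (Fintype.bijective_iff_injective_and_card _).2
    ⟨injective_sumElim_of_unique (fun m => (hinj m).ne zero_ne_one) ha hb
      fun k _ _ => (huniq k).unique, by simp [two_mul]⟩
  intro m
  refine ⟨a m, b m, ha m, hb m, ?_⟩
  have hodd := odd_add_of_forall_not_interleaved (.ofBijective _ hends)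
    (not_interleaved_of_disjoint hcont hmem hdisj ha hb) (.inl m)
  simp only [Equiv.ofBijective_apply, Sum.elim_inl, Sum.swap_inl, Sum.elim_inr] at hodd
  rcases Nat.even_or_odd (a m) with h | h
  · exact .inl ⟨h, (Nat.odd_add'.1 hodd).2 h⟩
  · exact .inr ⟨h, (Nat.odd_add.1 hodd).1 h⟩

/-- If `p` pairwise disjoint injective arcs in the closed unit disc meet the boundary
circle exactly in their endpoints, the endpoints being exactly the `2p` equally spaced
boundary points `z_k` (each such point being an endpoint of exactly one arc), then every
arc joins a point `z_a` to a point `z_b` with `a` and `b` of opposite parity. -/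
theorem disc_arcs_join_opposite_parity (p : ℕ) (hp : 1 ≤ p)
    (γ : Fin p → unitInterval → ℂ)
    (hcont : ∀ m, Continuous (γ m))
    (hinj : ∀ m, Function.Injective (γ m))
    (hmem : ∀ m t, γ m t ∈ Metric.closedBall (0 : ℂ) 1)
    (hbdry : ∀ m t, ‖γ m t‖ = 1 ↔ (t = 0 ∨ t = 1))
    (hdisj : ∀ m n, m ≠ n → Disjoint (Set.range (γ m)) (Set.range (γ n)))
    (hend0 : ∀ m, ∃ k : Fin (2 * p), γ m 0 = bdryPt p k)
    (hend1 : ∀ m, ∃ k : Fin (2 * p), γ m 1 = bdryPt p k)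
    (huniq : ∀ k : Fin (2 * p), ∃! m : Fin p, bdryPt p k = γ m 0 ∨ bdryPt p k = γ m 1) :
    ∀ m : Fin p, ∃ a b : Fin (2 * p), γ m 0 = bdryPt p a ∧ γ m 1 = bdryPt p b ∧
      ((Even (a : ℕ) ∧ Odd (b : ℕ)) ∨ (Odd (a : ℕ) ∧ Even (b : ℕ))) :=
  disc_arcs_join_opposite_parity_general p γ hcont hinj hmem hdisj hend0 hend1 huniq
end

section
/- Let p ≥ 2 and place the 2p points B_0, C_0, B_1, C_1, …, B_{p−1}, C_{p−1} in this cyclic order around a circle (B_i at position 2i and C_i at position 2i+1 in ℤ/2p). For a fixed integer k, consider the perfect matching that pairs B_i with C_{(i+k) mod p} for each i. This matching is noncrossing if and only if k ≡ 0 (mod p) or k ≡ p−1 (mod p). -/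
/-- Two pairs `{a, b}` and `{c, d}` of points with positions in `{0, …, n−1}`, placed in
this cyclic order on a circle, cross if (with `a < b`, `c < d`) `a < c < b < d` or
`c < a < d < b`. -/
def PairsCrossNat (e f : Finset ℕ) : Prop :=
  ∃ a b c d : ℕ, a ∈ e ∧ b ∈ e ∧ c ∈ f ∧ d ∈ f ∧
    ((a < c ∧ c < b ∧ b < d) ∨ (c < a ∧ a < d ∧ d < b))

/-- The pair of the matching joining `B_i` (at position `2i`) to `C_{(i+k) mod p}`
(at position `2((i+k) mod p) + 1`). -/
def bingPair (p : ℕ) (k : ℤ) (i : Fin p) : Finset ℕ :=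
  {2 * (i : ℕ), 2 * (((i : ℤ) + k) % (p : ℤ)).toNat + 1}

/-!
Write `r = k mod p`, so that `B_i` is joined to `C_{(i+r) mod p}`. For `r = 0` every pair
`{B_i, C_i}` consists of neighbouring points, and for `r = p − 1` so does every pair
`{C_{i−1}, B_i}` with `i ≥ 1`; a pair of neighbouring points crosses nothing, and of two
distinct pairs at most one is the remaining pair `{B_0, C_{p−1}}`. For `0 < r < p − 1` the
pairs `{B_0, C_r}` and `{B_1, C_{r+1}}` cross.
-/

theorem PairsCrossNat.symm {e f : Finset ℕ} (h : PairsCrossNat e f) : PairsCrossNat f e := by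
  obtain ⟨a, b, c, d, ha, hb, hc, hd, h | h⟩ := h
  · exact ⟨c, d, a, b, hc, hd, ha, hb, Or.inr h⟩
  · exact ⟨c, d, a, b, hc, hd, ha, hb, Or.inl h⟩

theorem pairsCrossNat_pair_of_lt {a b c d : ℕ} (hac : a < c) (hcb : c < b) (hbd : b < d) :
    PairsCrossNat {a, b} {c, d} :=
  ⟨a, b, c, d, by simp, by simp, by simp, by simp, Or.inl ⟨hac, hcb, hbd⟩⟩

theorem not_pairsCrossNat_consecutive_left (x : ℕ) (f : Finset ℕ) :
    ¬ PairsCrossNat {x, x + 1} f := by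
  rintro ⟨a, b, c, d, ha, hb, -, -, h⟩
  simp only [Finset.mem_insert, Finset.mem_singleton] at ha hb
  omega

theorem not_pairsCrossNat_consecutive_right (e : Finset ℕ) (x : ℕ) :
    ¬ PairsCrossNat e {x, x + 1} :=
  fun h => not_pairsCrossNat_consecutive_left x e h.symm

section Bing

variable {p : ℕ} {k : ℤ}

theorem bingPair_eq (i : Fin p) :
    bingPair p k i = {2 * (i : ℕ), 2 * (((i : ℕ) + (k % p).toNat) % p) + 1} := by
  have hp : (p : ℤ) ≠ 0 := by exact_mod_cast i.pos.ne'
  have hr : ((k % p).toNat : ℤ) = k % p := Int.toNat_of_nonneg (Int.emod_nonneg k hp)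
  have hmod : ((i : ℤ) + k) % p = (((i : ℕ) + (k % p).toNat) % p : ℕ) := by
    push_cast [hr]
    exact (Int.add_emod_emod _ _ _).symm
  rw [bingPair, hmod, Int.toNat_natCast]

theorem exists_bingPair_eq_consecutive (hk : k % p = 0 ∨ k % p = p - 1) (i : Fin p)
    (hi : (i : ℕ) ≠ 0) : ∃ x, bingPair p k i = {x, x + 1} := by
  rw [bingPair_eq]
  rcases hk with hk | hk
  · refine ⟨2 * i, ?_⟩
    rw [hk, Int.toNat_zero, add_zero, Nat.mod_eq_of_lt i.isLt]
  · have hr : (k % p).toNat = p - 1 := by omega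
    have hshift : ((i : ℕ) + (p - 1)) % p = (i : ℕ) - 1 := by
      rw [show (i : ℕ) + (p - 1) = (i - 1) + p by omega, Nat.add_mod_right,
        Nat.mod_eq_of_lt (by omega)]
    refine ⟨2 * i - 1, ?_⟩
    rw [hr, hshift, Finset.pair_comm]
    congr 2 <;> omega

theorem pairsCrossNat_bingPair_zero_one (hp : 2 ≤ p) (hk : ¬(k % p = 0 ∨ k % p = p - 1)) :
    PairsCrossNat (bingPair p k ⟨0, by omega⟩) (bingPair p k ⟨1, hp⟩) := by
  have hr : 0 < (k % p).toNat ∧ (k % p).toNat + 1 < p := by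
    have := Int.emod_nonneg k (by omega : (p : ℤ) ≠ 0)
    have := Int.emod_lt_of_pos k (by omega : (0 : ℤ) < p)
    omega
  rw [bingPair_eq, bingPair_eq, Fin.val_mk, Fin.val_mk, Nat.mod_eq_of_lt (by omega),
    Nat.mod_eq_of_lt (by omega)]
  exact pairsCrossNat_pair_of_lt (by omega) (by omega) (by omega)

end Bing

/-- With points `B_0, C_0, B_1, C_1, …, B_{p−1}, C_{p−1}` in this cyclic order, the
matching pairing `B_i` with `C_{(i+k) mod p}` is noncrossing iff `k ≡ 0 (mod p)`
or `k ≡ p − 1 (mod p)`. -/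
theorem bing_matching_noncrossing_iff (p : ℕ) (hp : 2 ≤ p) (k : ℤ) :
    (∀ i j : Fin p, i ≠ j → ¬ PairsCrossNat (bingPair p k i) (bingPair p k j)) ↔
      (k % (p : ℤ) = 0 ∨ k % (p : ℤ) = (p : ℤ) - 1) := by
  constructor
  · intro h
    by_contra hk
    exact h _ _ (by simp [Fin.ext_iff]) (pairsCrossNat_bingPair_zero_one hp hk)
  · rintro hk i j hij
    rcases eq_or_ne (i : ℕ) 0 with hi | hi
    · have hj : (j : ℕ) ≠ 0 := fun hj => hij (Fin.ext (hi.trans hj.symm))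
      obtain ⟨x, hx⟩ := exists_bingPair_eq_consecutive hk j hj
      rw [hx]
      exact not_pairsCrossNat_consecutive_right _ x
    · obtain ⟨x, hx⟩ := exists_bingPair_eq_consecutive hk i hi
      rw [hx]
      exact not_pairsCrossNat_consecutive_left x _
end

section
/- Let j, j′ : ℕ → ℕ be strictly increasing sequences with j(0) ≥ 1 and j′(0) ≥ 1, and define m_i = 2^i + 3^{j(i)} and n_i = 2^i + 3^{j′(i)} for i ≥ 0. Suppose there exist natural numbers p and q such that Σ_{i=0}^{p−1} m_i = Σ_{i=0}^{q−1} n_i and m_{p+k} = n_{q+k} for all k ≥ 0. Then p = q and j(i) = j′(i) for all i. Consequently, for distinct increasing sequences j ≠ j′, the Bing-Whitehead parameter sequences (m_i) and (n_i) do not differ by a finite number of Whitehead constructions, and the associated Bing-Whitehead Cantor sets BW(m_1, m_2, …) and BW(n_1, n_2, …) are inequivalent. -/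
private lemma bw_ge (j : ℕ → ℕ) (hj : StrictMono j) (hj0 : 1 ≤ j 0) :
    ∀ i, i + 1 ≤ j i := by
  intro i
  induction i with
  | zero => exact hj0
  | succ i ih => have : j i < j (i + 1) := hj (by omega); omega

private lemma bw_aux_pq (p q : ℕ) (a b : ℕ → ℕ)
    (ha : ∀ k, k + 1 ≤ a k) (hb : ∀ k, k + 1 ≤ b k)
    (h : ∀ k, 2 ^ (p + k) + 3 ^ (a k) = 2 ^ (q + k) + 3 ^ (b k))
    (hpq : p ≤ q) : p = q := by
  by_contra hne
  set e := q - p with he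
  have hqe : q = p + e := by omega
  have he1 : 1 ≤ e := by omega
  have heq := h e
  rw [hqe] at heq
  obtain ⟨A, hA'⟩ : (3:ℕ) ^ (e + 1) ∣ 3 ^ (a e) := pow_dvd_pow 3 (by have := ha e; omega)
  obtain ⟨B, hB'⟩ : (3:ℕ) ^ (e + 1) ∣ 3 ^ (b e) := pow_dvd_pow 3 (by have := hb e; omega)
  rw [hA', hB'] at heq
  have h2 : (2:ℕ) ^ (p + e + e) = 2 ^ (p + e) * 2 ^ e := by rw [← pow_add]
  rw [h2] at heq
  set X := (2:ℕ) ^ (p + e) with hX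
  set c := (3:ℕ) ^ (e + 1) with hc
  have h2e : 2 ≤ (2:ℕ) ^ e := by
    calc (2:ℕ) = 2 ^ 1 := rfl
    _ ≤ 2 ^ e := Nat.pow_le_pow_right (by norm_num) he1
  set t := 2 ^ e - 1 with htdef
  have ht : (2:ℕ) ^ e = t + 1 := by omega
  rw [ht, Nat.mul_add, Nat.mul_one] at heq
  -- heq : X + c * A = X * t + X + c * B
  have h3 : c * A = X * t + c * B := by linarith
  have hdvd : c ∣ X * t :=
    ⟨A - B, by rw [Nat.mul_sub c A B]; exact (Nat.sub_eq_of_eq_add h3).symm⟩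
  have hcop : Nat.Coprime c X := Nat.Coprime.pow _ _ (by norm_num)
  have hct : c ∣ t := hcop.dvd_of_dvd_mul_left hdvd
  have htpos : 0 < t := by omega
  have hle : c ≤ t := Nat.le_of_dvd htpos hct
  have h23 : (2:ℕ) ^ e ≤ 3 ^ e := Nat.pow_le_pow_left (by norm_num) e
  have h33 : (3:ℕ) ^ e < 3 ^ (e + 1) := Nat.pow_lt_pow_right (by norm_num) (Nat.lt_succ_self e)
  omega

private lemma bw_sum_bound (j : ℕ → ℕ) (hj : StrictMono j) :
    ∀ p, ∑ i ∈ Finset.range p, 3 ^ (j i) < 3 ^ (j p) := by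
  intro p
  induction p with
  | zero => simp
  | succ p ih =>
    rw [Finset.sum_range_succ]
    have hjp : j p + 1 ≤ j (p + 1) := hj (Nat.lt_succ_self p)
    have h1 : (3:ℕ) ^ (j p + 1) ≤ 3 ^ (j (p + 1)) := Nat.pow_le_pow_right (by norm_num) hjp
    have h2 : (3:ℕ) ^ (j p + 1) = 3 ^ (j p) * 3 := pow_succ 3 (j p)
    omega

private lemma bw_sum_inj (j j' : ℕ → ℕ) (hj : StrictMono j) (hj' : StrictMono j') :
    ∀ p, (∑ i ∈ Finset.range p, 3 ^ (j i) = ∑ i ∈ Finset.range p, 3 ^ (j' i)) →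
      ∀ i < p, j i = j' i := by
  intro p
  induction p with
  | zero => intro _ i hi; omega
  | succ p ih =>
    intro hsum i hi
    rw [Finset.sum_range_succ, Finset.sum_range_succ] at hsum
    have b1 := bw_sum_bound j hj p
    have b2 := bw_sum_bound j' hj' p
    have hlast : j p = j' p := by
      by_contra hne
      rcases Nat.lt_or_ge (j p) (j' p) with h | h
      · have h1 : (3:ℕ) ^ (j p + 1) ≤ 3 ^ (j' p) := Nat.pow_le_pow_right (by norm_num) h
        have h2 : (3:ℕ) ^ (j p + 1) = 3 ^ (j p) * 3 := pow_succ 3 (j p)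
        have h3 : 0 < (3:ℕ) ^ (j p) := by positivity
        omega
      · have h' : j' p < j p := by omega
        have h1 : (3:ℕ) ^ (j' p + 1) ≤ 3 ^ (j p) := Nat.pow_le_pow_right (by norm_num) h'
        have h2 : (3:ℕ) ^ (j' p + 1) = 3 ^ (j' p) * 3 := pow_succ 3 (j' p)
        have h3 : 0 < (3:ℕ) ^ (j' p) := by positivity
        omega
    rcases Nat.lt_or_ge i p with h | h
    · have hsum' : ∑ i ∈ Finset.range p, 3 ^ (j i) = ∑ i ∈ Finset.range p, 3 ^ (j' i) := by
        rw [hlast] at hsum; omega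
      exact ih hsum' i h
    · have : i = p := by omega
      rw [this]; exact hlast

/-- For strictly increasing sequences `j, j'` of positive integers, the Bing-Whitehead
parameter sequences `m_i = 2^i + 3^{j(i)}` and `n_i = 2^i + 3^{j'(i)}` differ by a finite
number of Whitehead constructions only trivially: if `Σ_{i<p} m_i = Σ_{i<q} n_i` and
`m_{p+k} = n_{q+k}` for all `k`, then `p = q` and `j = j'`. -/
theorem bing_whitehead_parameters_rigid
    (j j' : ℕ → ℕ) (hj : StrictMono j) (hj' : StrictMono j')
    (hj0 : 1 ≤ j 0) (hj'0 : 1 ≤ j' 0)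
    (m n : ℕ → ℕ)
    (hm : ∀ i, m i = 2 ^ i + 3 ^ j i) (hn : ∀ i, n i = 2 ^ i + 3 ^ j' i)
    (p q : ℕ)
    (hsum : ∑ i ∈ Finset.range p, m i = ∑ i ∈ Finset.range q, n i)
    (htail : ∀ k : ℕ, m (p + k) = n (q + k)) :
    p = q ∧ ∀ i, j i = j' i := by
  have hjge := bw_ge j hj hj0
  have hj'ge := bw_ge j' hj' hj'0
  have htail' : ∀ k, 2 ^ (p + k) + 3 ^ (j (p + k)) = 2 ^ (q + k) + 3 ^ (j' (q + k)) := by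
    intro k; have h1 := htail k; rw [hm, hn] at h1; exact h1
  have hpq : p = q := by
    rcases le_total p q with h | h
    · exact bw_aux_pq p q (fun k => j (p + k)) (fun k => j' (q + k))
        (fun k => by show k + 1 ≤ j (p + k); have := hjge (p + k); omega)
        (fun k => by show k + 1 ≤ j' (q + k); have := hj'ge (q + k); omega)
        htail' h
    · exact (bw_aux_pq q p (fun k => j' (q + k)) (fun k => j (p + k))
        (fun k => by show k + 1 ≤ j' (q + k); have := hj'ge (q + k); omega)
        (fun k => by show k + 1 ≤ j (p + k); have := hjge (p + k); omega)
        (fun k => (htail' k).symm) h).symm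
  subst hpq
  refine ⟨rfl, ?_⟩
  have htail3 : ∀ i, p ≤ i → j i = j' i := by
    intro i hip
    have hk := htail' (i - p)
    have hi' : p + (i - p) = i := by omega
    rw [hi'] at hk
    have h3 : (3:ℕ) ^ (j i) = 3 ^ (j' i) := by omega
    exact Nat.pow_right_injective (by norm_num) h3
  simp only [hm, hn] at hsum
  rw [Finset.sum_add_distrib, Finset.sum_add_distrib] at hsum
  have hsum3 : ∑ i ∈ Finset.range p, 3 ^ (j i) = ∑ i ∈ Finset.range p, 3 ^ (j' i) :=
    Nat.add_left_cancel hsum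
  intro i
  rcases Nat.lt_or_ge i p with h | h
  · exact bw_sum_inj j j' hj hj' p hsum3 i h
  · exact htail3 i h
end
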